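/- For h > 0, β > 1/2, and w ≠ 0, the Fourier transform of q(x) = (x² + h²)^{-β} satisfies ∫_{-∞}^{∞} (x² + h²)^{-β} e^{-2πi w x} dx = (2^{1-β} √(2π) h^{1/2-β} (2π|w|)^{β-1/2} / Γ(β)) · K_{β-1/2}(2π h |w|), where K_ν is the modified Bessel function of the second kind. -/

import Mathlib

/-!
The integrand is even, so its Fourier integral is real and equals
`2 ∫₀^∞ cos (a x) (x² + h²)^(-β) dx` with `a = 2π|w|`. The substitution `s = a x` turns this
into `a^(2β-1) ∫₀^∞ cos s / (s² + (ah)²)^β ds`, which is the integral defining `K_{β-1/2}(ah)`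
(there `ν + 1/2 = β`); the prefactors then agree.
-/

open MeasureTheory Real

/-- The modified Bessel function of the second kind, via its integral representation
`K_ν(y) = Γ(ν + 1/2) (2y)^ν / √π · ∫₀^∞ cos t / (t² + y²)^(ν+1/2) dt`. -/
noncomputable def besselK (ν y : ℝ) : ℝ :=
  Real.Gamma (ν + 1/2) * (2 * y) ^ ν / Real.sqrt π *
    ∫ t in Set.Ioi (0 : ℝ), Real.cos t / (t ^ 2 + y ^ 2) ^ (ν + 1/2)

theorem integrable_sq_add_sq_rpow_neg {h β : ℝ} (hh : h ≠ 0) (hβ : 1/2 < β) :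
    Integrable fun x : ℝ => (x ^ 2 + h ^ 2) ^ (-β) := by
  have hJ : Integrable fun x : ℝ => (1 + ‖x‖ ^ 2) ^ (-(2 * β) / 2) :=
    integrable_rpow_neg_one_add_norm_sq (by simp; linarith)
  refine ((hJ.comp_div hh).const_mul ((h ^ 2) ^ (-β))).congr (.of_forall fun x => ?_)
  have hx : x ^ 2 + h ^ 2 = h ^ 2 * (1 + ‖x / h‖ ^ 2) := by
    rw [norm_div, Real.norm_eq_abs, Real.norm_eq_abs, div_pow, sq_abs, sq_abs]
    field_simp
    ring
  dsimp only
  rw [hx, mul_rpow (by positivity) (by positivity), neg_div, mul_div_cancel_left₀ _ two_ne_zero]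

open Complex ComplexConjugate in
theorem integral_ofReal_mul_cexp_eq_integral_cos_mul_of_even {f : ℝ → ℝ}
    (hf : Integrable f) (heven : ∀ x, f (-x) = f x) (w : ℝ) :
    ∫ x : ℝ, (f x : ℂ) * exp (-(2 * (π : ℂ) * I * w * x)) =
      ((∫ x : ℝ, Real.cos (2 * π * w * x) * f x : ℝ) : ℂ) := by
  set F : ℝ → ℂ := fun x => (f x : ℂ) * exp (-(2 * (π : ℂ) * I * w * x))
  have hphase (x : ℝ) :
      -(2 * (π : ℂ) * I * w * x) = ((-(2 * π * w * x) : ℝ) : ℂ) * I := by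
    push_cast; ring
  have hF : Integrable F :=
    hf.ofReal.mul_bdd (c := 1) (by fun_prop) (.of_forall fun x => by
      rw [hphase, norm_exp_ofReal_mul_I])
  have hreal : conj (∫ x, F x) = ∫ x, F x := by
    -- `x ↦ -x` maps the integrand to its conjugate
    rw [← integral_conj, ← integral_neg_eq_self]
    congr 1 with x
    simp [F, heven, ← exp_conj, map_ofNat]
  rw [← RCLike.conj_eq_iff_re.mp hreal, ← integral_re hF]
  congr 2 with x
  simp only [F]
  rw [hphase, RCLike.re_to_complex, re_ofReal_mul, exp_ofReal_mul_I_re, Real.cos_neg, mul_comm]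

theorem integral_cos_mul_eq_two_mul_setIntegral_Ioi_of_even {f : ℝ → ℝ}
    (heven : ∀ x, f (-x) = f x) (w : ℝ) :
    ∫ x : ℝ, Real.cos (2 * π * w * x) * f x =
      2 * ∫ x in Set.Ioi 0, Real.cos (2 * π * |w| * x) * f x := by
  rw [← integral_comp_abs (f := fun x => Real.cos (2 * π * |w| * x) * f x)]
  congr 1 with x
  have hf : f |x| = f x := by
    rcases abs_choice x with hx | hx <;> rw [hx]
    exact heven x
  rw [hf, ← Real.cos_abs (2 * π * w * x), abs_mul, abs_mul, abs_mul, abs_two,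
    abs_of_pos pi_pos]

theorem setIntegral_Ioi_cos_mul_sq_add_sq_rpow_neg {a : ℝ} (ha : 0 < a) (h β : ℝ) :
    ∫ x in Set.Ioi 0, Real.cos (a * x) * (x ^ 2 + h ^ 2) ^ (-β) =
      a ^ (2 * β - 1) * ∫ s in Set.Ioi 0, Real.cos s / (s ^ 2 + (a * h) ^ 2) ^ β := by
  set F : ℝ → ℝ := fun s => Real.cos s / (s ^ 2 + (a * h) ^ 2) ^ β
  have hscale (x : ℝ) :
      Real.cos (a * x) * (x ^ 2 + h ^ 2) ^ (-β) = a ^ (2 * β) * F (a * x) := by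
    simp only [F]
    have : (a * x) ^ 2 + (a * h) ^ 2 = a ^ 2 * (x ^ 2 + h ^ 2) := by ring
    have ha2 : (a ^ 2) ^ β = a ^ (2 * β) := by
      rw [← rpow_natCast, ← rpow_mul ha.le, Nat.cast_ofNat]
    rw [this, mul_rpow (by positivity) (by positivity), ha2, rpow_neg (by positivity)]
    field_simp
  calc _ = a ^ (2 * β) * ∫ x in Set.Ioi 0, F (a * x) := by
        simp_rw [hscale]; exact integral_const_mul _ _
    _ = a ^ (2 * β) * (a⁻¹ * ∫ s in Set.Ioi 0, F s) := by
        rw [integral_comp_mul_left_Ioi F 0 ha, mul_zero, smul_eq_mul]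
    _ = _ := by rw [rpow_sub ha, rpow_one]; ring

theorem besselK_sub_half (β y : ℝ) :
    besselK (β - 1/2) y = Gamma β * (2 * y) ^ (β - 1/2) / √π *
      ∫ t in Set.Ioi 0, Real.cos t / (t ^ 2 + y ^ 2) ^ β := by
  rw [besselK, sub_add_cancel]

theorem two_mul_rpow_two_mul_sub_one_eq {a h : ℝ} (ha : 0 < a) (hh : 0 < h) (β : ℝ) :
    2 * a ^ (2 * β - 1) =
      2 ^ (1 - β) * √(2 * π) * h ^ (1/2 - β) * a ^ (β - 1/2) *
        (2 * (a * h)) ^ (β - 1/2) / √π := by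
  have h2 : (2 : ℝ) ^ (1 - β) * √2 * 2 ^ (β - 1/2) = 2 := by
    rw [sqrt_eq_rpow, ← rpow_add two_pos, ← rpow_add two_pos]
    convert rpow_one (2 : ℝ) using 2; ring
  have hh' : h ^ (1/2 - β) * h ^ (β - 1/2) = 1 := by
    rw [← rpow_add hh]; simp
  have ha' : a ^ (β - 1/2) * a ^ (β - 1/2) = a ^ (2 * β - 1) := by
    rw [← rpow_add ha]; ring_nf
  have hπ : √π ≠ 0 := by positivity
  calc 2 * a ^ (2 * β - 1)
      = (2 ^ (1 - β) * √2 * 2 ^ (β - 1/2)) * (h ^ (1/2 - β) * h ^ (β - 1/2)) *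
          (a ^ (β - 1/2) * a ^ (β - 1/2)) * √π / √π := by
        rw [h2, hh', ha', mul_div_cancel_right₀ _ hπ]; ring
    _ = _ := by
        rw [mul_rpow (by positivity) (by positivity), mul_rpow ha.le hh.le, sqrt_mul zero_le_two]
        ring

theorem stmt_4 (h β w : ℝ) (hh : 0 < h) (hβ : 1/2 < β) (hw : w ≠ 0) :
    (∫ x : ℝ, (((x ^ 2 + h ^ 2) ^ (-β) : ℝ) : ℂ) *
        Complex.exp (-(2 * (π : ℂ) * Complex.I * (w : ℂ) * (x : ℂ)))) =
      ((2 ^ (1 - β) * Real.sqrt (2 * π) * h ^ (1/2 - β) * (2 * π * |w|) ^ (β - 1/2)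
          / Real.Gamma β * besselK (β - 1/2) (2 * π * h * |w|) : ℝ) : ℂ) := by
  have ha : 0 < 2 * π * |w| := by positivity
  have hΓ : Gamma β ≠ 0 := (Gamma_pos_of_pos (by linarith)).ne'
  have heven (x : ℝ) : ((-x) ^ 2 + h ^ 2) ^ (-β) = (x ^ 2 + h ^ 2) ^ (-β) := by rw [neg_sq]
  rw [integral_ofReal_mul_cexp_eq_integral_cos_mul_of_even
      (integrable_sq_add_sq_rpow_neg hh.ne' hβ) heven w,
    integral_cos_mul_eq_two_mul_setIntegral_Ioi_of_even heven,
    setIntegral_Ioi_cos_mul_sq_add_sq_rpow_neg ha,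
    show 2 * π * h * |w| = 2 * π * |w| * h by ring, besselK_sub_half, ← mul_assoc,
    two_mul_rpow_two_mul_sub_one_eq ha hh]
  congr 1
  field_simp
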